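/- Let n ≥ 1, N ∈ ℕ₀^n, α ∈ ℕ₀^n, and θ ∈ ℂ^n with θ_j + ⋯ + θ_n ≠ 0 for all j. With δ, U_δ, G_{N,α,θ} as defined, if |L(N,α)| = |K(N,α)| then the value at t = 0 of the analytic extension of G_{N,α,θ} to U_δ equals [ (−1)^{n−|K(N,α)|} · ∏_{j ∈ L(N,α)} ( (−1)^{α_j − N_j} θ_j / ( α_j · binom(α_j − 1, N_j) ) ) · ∏_{j ∉ L(N,α)} binom(N_j, α_j) ] / [ ∏_{j ∉ K(N,α)} ( ((N_j+⋯+N_n) + (n+1−j) − (α_j+⋯+α_n)) / (θ_j+⋯+θ_n) ) ]. -/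

import Mathlib

/-- Generalized binomial coefficient `binom(z, m) = z(z−1)⋯(z−m+1)/m!`. -/
noncomputable def cbinom (z : ℂ) (m : ℕ) : ℂ :=
  (∏ k ∈ Finset.range m, (z - (k : ℂ))) / (m.factorial : ℂ)

/-- The set `K(N,α)` of the paper (the paper's `n` is `n + 1` here; index `j : Fin (n+1)`
corresponds to the paper's `j+1`, so the paper's `n + 1 - j` is `n + 1 - j.val`). -/
def Kset (n : ℕ) (N α : Fin (n + 1) → ℕ) : Finset (Fin (n + 1)) :=
  Finset.univ.filter fun j =>
    (n + 1 - j.val) + ∑ i ∈ Finset.Ici j, N i = ∑ i ∈ Finset.Ici j, α i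

/-- The set `L(N,α)` of the paper. -/
def Lset (n : ℕ) (N α : Fin (n + 1) → ℕ) : Finset (Fin (n + 1)) :=
  Finset.univ.filter fun j => N j + 1 ≤ α j

/-- `δ = (1/2) min_j { (1+|θ_j|)⁻¹, |θ_j+⋯+θ_n|⁻¹ }`. -/
noncomputable def deltaOf (n : ℕ) (θ : Fin (n + 1) → ℂ) : ℝ :=
  (1 / 2) *
    Finset.univ.inf' Finset.univ_nonempty fun j : Fin (n + 1) =>
      min (1 + ‖θ j‖)⁻¹ (‖∑ i ∈ Finset.Ici j, θ i‖)⁻¹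

/-- The function `G_{N,α,θ}` of the paper, defined a priori away from `t = 0`. -/
noncomputable def Gfun (n : ℕ) (N α : Fin (n + 1) → ℕ) (θ : Fin (n + 1) → ℂ) (t : ℂ) : ℂ :=
  (∏ j, cbinom ((N j : ℂ) - t * θ j) (α j)) /
    ∏ j : Fin (n + 1),
      (t - ((∑ i ∈ Finset.Ici j, (N i : ℂ)) + ((n : ℂ) + 1 - (j.val : ℂ)) -
            ∑ i ∈ Finset.Ici j, (α i : ℂ)) / ∑ i ∈ Finset.Ici j, θ i)

/-! For `j ∈ L(N,α)` the binomial `binom(N_j - tθ_j, α_j)` contains the factor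
`N_j - tθ_j - N_j = -tθ_j`, and for `j ∈ K(N,α)` the `j`-th pole of `G_{N,α,θ}` is `0`. When
`|L(N,α)| = |K(N,α)|` these powers of `t` cancel, so off `0` the function `G_{N,α,θ}` agrees with a
function `Greg` that is continuous at `0`. An analytic extension is continuous too, hence takes the
value `Greg 0`, and that value is computed factor by factor. -/

open Finset Filter Topology
open scoped Nat

lemma cbinom_natCast (b a : ℕ) : cbinom b a = b.choose a := by
  rw [cbinom, prod_range_natCast_sub, ← Nat.descFactorial_eq_prod_range,
    Nat.descFactorial_eq_factorial_mul_choose, Nat.cast_mul,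
    mul_div_cancel_left₀ _ (by exact_mod_cast a.factorial_ne_zero)]

lemma continuous_cbinom (m : ℕ) : Continuous fun z => cbinom z m := by
  unfold cbinom
  fun_prop

/-- The quotient by `t` of `binom(m - tθ, m + 1 + r)`, which vanishes at `t = 0` through its
factor `k = m`. -/
noncomputable def cbinomQuot (m r : ℕ) (θ t : ℂ) : ℂ :=
  -θ * (∏ k ∈ range m, ((m : ℂ) - t * θ - k)) * (∏ k ∈ range r, (-(t * θ) - (k + 1))) /
    (m + 1 + r)!

lemma cbinom_natCast_sub_mul (m r : ℕ) (θ t : ℂ) :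
    cbinom (m - t * θ) (m + 1 + r) = t * cbinomQuot m r θ t := by
  unfold cbinom cbinomQuot
  rw [prod_range_add, prod_range_succ]
  have hshift : ∀ k ∈ range r, (m : ℂ) - t * θ - ((m + 1 + k : ℕ) : ℂ) = -(t * θ) - (k + 1) := by
    intro k _
    push_cast
    ring
  rw [prod_congr rfl hshift]
  ring

lemma continuous_cbinomQuot (m r : ℕ) (θ : ℂ) : Continuous (cbinomQuot m r θ) := by
  unfold cbinomQuot
  fun_prop

lemma cbinomQuot_zero (m r : ℕ) (θ : ℂ) :
    cbinomQuot m r θ 0 = (-1) ^ (r + 1) * θ / ((m + 1 + r : ℕ) * (m + r).choose m) := by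
  have hfact : ((m + r).choose m : ℂ) * m ! * r ! = (m + r)! := by
    rw [Nat.choose_symm_add]
    exact_mod_cast Nat.add_choose_mul_factorial_mul_factorial m r
  have hsucc : ((m + 1 + r)! : ℂ) = (m + 1 + r : ℕ) * (m + r)! := by
    rw [show m + 1 + r = m + r + 1 by omega, Nat.factorial_succ]
    push_cast
    ring
  have hfalling : ∏ k ∈ range m, ((m : ℂ) - k) = m ! := by
    rw [prod_range_natCast_sub, ← Nat.descFactorial_eq_prod_range, Nat.descFactorial_self]
  have hrising : ∏ k ∈ range r, -((k : ℂ) + 1) = (-1) ^ r * r ! := by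
    rw [prod_neg, card_range, ← prod_range_add_one_eq_factorial]
    push_cast
    rfl
  have hm : ((m + 1 + r : ℕ) : ℂ) ≠ 0 := Nat.cast_ne_zero.mpr (by omega)
  have hc : ((m + r).choose m : ℂ) ≠ 0 := by exact_mod_cast (Nat.choose_pos (by omega)).ne'
  have hmfact : (m ! : ℂ) ≠ 0 := Nat.cast_ne_zero.mpr m.factorial_ne_zero
  have hrfact : (r ! : ℂ) ≠ 0 := Nat.cast_ne_zero.mpr r.factorial_ne_zero
  unfold cbinomQuot
  simp only [zero_mul, sub_zero, neg_zero, zero_sub]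
  rw [hfalling, hrising, hsucc, ← hfact]
  field_simp
  ring

lemma deltaOf_pos {n : ℕ} {θ : Fin (n + 1) → ℂ} (hθ : ∀ j, ∑ i ∈ Ici j, θ i ≠ 0) :
    0 < deltaOf n θ := by
  refine mul_pos one_half_pos ((lt_inf'_iff _).2 fun j _ => lt_min ?_ ?_)
  · positivity
  · exact inv_pos.2 (norm_pos_iff.2 (hθ j))

noncomputable def Gpole (n : ℕ) (N α : Fin (n + 1) → ℕ) (θ : Fin (n + 1) → ℂ)
    (j : Fin (n + 1)) : ℂ :=
  ((∑ i ∈ Ici j, (N i : ℂ)) + ((n : ℂ) + 1 - (j.val : ℂ)) - ∑ i ∈ Ici j, (α i : ℂ)) /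
    ∑ i ∈ Ici j, θ i

lemma Gpole_eq_zero_iff {n : ℕ} (N α : Fin (n + 1) → ℕ) {θ : Fin (n + 1) → ℂ} {j : Fin (n + 1)}
    (hθ : ∑ i ∈ Ici j, θ i ≠ 0) : Gpole n N α θ j = 0 ↔ j ∈ Kset n N α := by
  have hnum : (∑ i ∈ Ici j, (N i : ℂ)) + ((n : ℂ) + 1 - (j.val : ℂ)) - ∑ i ∈ Ici j, (α i : ℂ) =
      (((n + 1 - j.val) + ∑ i ∈ Ici j, N i : ℕ) : ℂ) - ((∑ i ∈ Ici j, α i : ℕ) : ℂ) := by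
    push_cast [Nat.cast_sub j.isLt.le]
    ring
  rw [Gpole, div_eq_zero_iff, or_iff_left hθ, hnum, sub_eq_zero, Nat.cast_inj]
  simp [Kset]

noncomputable def Greg (n : ℕ) (N α : Fin (n + 1) → ℕ) (θ : Fin (n + 1) → ℂ) (t : ℂ) : ℂ :=
  (∏ j ∈ Lset n N α, cbinomQuot (N j) (α j - N j - 1) (θ j) t) *
      (∏ j ∈ (Lset n N α)ᶜ, cbinom (N j - t * θ j) (α j)) /
    ∏ j ∈ (Kset n N α)ᶜ, (t - Gpole n N α θ j)

section Greg

variable {n : ℕ} {N α : Fin (n + 1) → ℕ} {θ : Fin (n + 1) → ℂ}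

lemma cbinom_eq_mul_cbinomQuot {j : Fin (n + 1)} (hj : j ∈ Lset n N α) (t : ℂ) :
    cbinom (N j - t * θ j) (α j) = t * cbinomQuot (N j) (α j - N j - 1) (θ j) t := by
  have hlt : N j + 1 ≤ α j := by simpa [Lset] using hj
  rw [← cbinom_natCast_sub_mul, show N j + 1 + (α j - N j - 1) = α j by omega]

lemma Gfun_eq_Greg (hθ : ∀ j, ∑ i ∈ Ici j, θ i ≠ 0)
    (hcard : (Lset n N α).card = (Kset n N α).card) {t : ℂ} (ht : t ≠ 0) :
    Gfun n N α θ t = Greg n N α θ t := by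
  have hnum : ∏ j, cbinom (N j - t * θ j) (α j) = t ^ (Lset n N α).card *
      ((∏ j ∈ Lset n N α, cbinomQuot (N j) (α j - N j - 1) (θ j) t) *
        ∏ j ∈ (Lset n N α)ᶜ, cbinom (N j - t * θ j) (α j)) := by
    rw [← prod_mul_prod_compl (Lset n N α),
      prod_congr rfl fun j hj => cbinom_eq_mul_cbinomQuot hj t, prod_mul_distrib, prod_const,
      mul_assoc]
  have hden : ∏ j, (t - Gpole n N α θ j) =
      t ^ (Kset n N α).card * ∏ j ∈ (Kset n N α)ᶜ, (t - Gpole n N α θ j) := by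
    rw [← prod_mul_prod_compl (Kset n N α),
      prod_congr rfl fun j hj => by rw [(Gpole_eq_zero_iff N α (hθ j)).2 hj, sub_zero],
      prod_const]
  change _ / ∏ j, (t - Gpole n N α θ j) = _
  rw [hnum, hden, hcard, mul_div_mul_left _ _ (pow_ne_zero _ ht), Greg]

lemma continuousAt_Greg_zero (hθ : ∀ j, ∑ i ∈ Ici j, θ i ≠ 0) :
    ContinuousAt (Greg n N α θ) 0 := by
  have hden : ∏ j ∈ (Kset n N α)ᶜ, ((0 : ℂ) - Gpole n N α θ j) ≠ 0 :=
    prod_ne_zero_iff.2 fun j hj =>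
      sub_ne_zero.2 (Ne.symm fun h => mem_compl.1 hj ((Gpole_eq_zero_iff N α (hθ j)).1 h))
  refine ContinuousAt.div (Continuous.continuousAt ?_) (by fun_prop) hden
  refine .mul (continuous_finsetProd _ fun j _ => continuous_cbinomQuot _ _ _)
    (continuous_finsetProd _ fun j _ => (continuous_cbinom _).comp (by fun_prop))

lemma Greg_zero : Greg n N α θ 0 =
    ((-1 : ℂ) ^ (n + 1 - (Kset n N α).card) *
        (∏ j ∈ Lset n N α,
          ((-1 : ℂ) ^ (α j - N j) * θ j / ((α j : ℂ) * ((α j - 1).choose (N j) : ℂ)))) *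
        ∏ j ∈ (Lset n N α)ᶜ, ((N j).choose (α j) : ℂ)) /
      ∏ j ∈ (Kset n N α)ᶜ, Gpole n N α θ j := by
  have hL : ∀ j ∈ Lset n N α, cbinomQuot (N j) (α j - N j - 1) (θ j) 0 =
      (-1 : ℂ) ^ (α j - N j) * θ j / ((α j : ℂ) * ((α j - 1).choose (N j) : ℂ)) := by
    intro j hj
    have hlt : N j + 1 ≤ α j := by simpa [Lset] using hj
    rw [cbinomQuot_zero, show N j + 1 + (α j - N j - 1) = α j by omega,
      show α j - N j - 1 + 1 = α j - N j by omega, show N j + (α j - N j - 1) = α j - 1 by omega]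
  have hK : ∏ j ∈ (Kset n N α)ᶜ, (0 - Gpole n N α θ j) =
      (-1) ^ (n + 1 - (Kset n N α).card) * ∏ j ∈ (Kset n N α)ᶜ, Gpole n N α θ j := by
    simp_rw [zero_sub, prod_neg, card_compl, Fintype.card_fin]
  simp only [Greg, zero_mul, sub_zero, cbinom_natCast, prod_congr rfl hL, hK]
  rcases neg_one_pow_eq_or ℂ (n + 1 - (Kset n N α).card) with hs | hs <;> rw [hs] <;> ring

end Greg

/-- if `|L(N,α)| = |K(N,α)|` then any analytic extension of `G_{N,α,θ}` to the
disk `U_δ` takes at `t = 0` the stated explicit value. -/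
theorem stmt5 (n : ℕ) (N α : Fin (n + 1) → ℕ) (θ : Fin (n + 1) → ℂ)
    (hθ : ∀ j : Fin (n + 1), ∑ i ∈ Finset.Ici j, θ i ≠ 0)
    (hcard : (Lset n N α).card = (Kset n N α).card) :
    ∀ G : ℂ → ℂ,
      DifferentiableOn ℂ G (Metric.ball 0 (deltaOf n θ)) →
      (∀ t ∈ Metric.ball (0 : ℂ) (deltaOf n θ), t ≠ 0 → G t = Gfun n N α θ t) →
      G 0 =
        ((-1 : ℂ) ^ (n + 1 - (Kset n N α).card) *
            (∏ j ∈ Lset n N α,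
              ((-1 : ℂ) ^ (α j - N j) * θ j / ((α j : ℂ) * ((α j - 1).choose (N j) : ℂ)))) *
            ∏ j ∈ (Lset n N α)ᶜ, ((N j).choose (α j) : ℂ)) /
          ∏ j ∈ (Kset n N α)ᶜ,
            (((∑ i ∈ Finset.Ici j, (N i : ℂ)) + ((n : ℂ) + 1 - (j.val : ℂ)) -
                ∑ i ∈ Finset.Ici j, (α i : ℂ)) / ∑ i ∈ Finset.Ici j, θ i) := by
  intro G hG hGeq
  have hball : Metric.ball (0 : ℂ) (deltaOf n θ) ∈ 𝓝 0 := Metric.ball_mem_nhds 0 (deltaOf_pos hθ)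
  have hGreg : G =ᶠ[𝓝[≠] 0] Greg n N α θ := by
    filter_upwards [nhdsWithin_le_nhds hball, self_mem_nhdsWithin] with t ht ht0
    rw [hGeq t ht ht0, Gfun_eq_Greg hθ hcard ht0]
  have hGc : ContinuousAt G 0 := hG.continuousOn.continuousAt hball
  have hG0 : G 0 = Greg n N α θ 0 :=
    ((hGc.eventuallyEq_nhds_iff_eventuallyEq_nhdsNE (continuousAt_Greg_zero hθ)).1 hGreg).eq_of_nhds
  rw [hG0, Greg_zero]
  rfl
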